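/- For the bi-periodic Fibonacci sequence and all n ≥ 1, a^(1-ε(n)) b^(ε(n)) q_{n+1} q_{n-1} − a^(ε(n)) b^(1-ε(n)) q_n² = a·(−1)^n, where ε(n) = n − 2⌊n/2⌋ is the parity of n. -/

import Mathlib

/-- Bi-periodic Fibonacci sequence: q 0 = 0, q 1 = 1,
    q n = a * q (n-1) + q (n-2) if n even, q n = b * q (n-1) + q (n-2) if n odd. -/
def bpFib (a b : ℝ) : ℕ → ℝ
  | 0 => 0
  | 1 => 1
  | n + 2 => (if Even (n + 2) then a else b) * bpFib a b (n + 1) + bpFib a b n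

/-- Bi-periodic Lucas sequence: l 0 = 2, l 1 = a,
    l n = b * l (n-1) + l (n-2) if n even, l n = a * l (n-1) + l (n-2) if n odd. -/
def bpLucas (a b : ℝ) : ℕ → ℝ
  | 0 => 2
  | 1 => a
  | n + 2 => (if Even (n + 2) then b else a) * bpLucas a b (n + 1) + bpLucas a b n

/-! For any recurrence `q (n + 2) = c n * q (n + 1) + q n` with 2-periodic coefficients, the
Cassini quantity `c (k + 1) * q (k + 2) * q k - c k * q (k + 1) ^ 2` changes sign at every step:
substituting the recurrence twice, the cross terms `c k * c (k + 1) * q (k + 1) * q (k + 2)`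
cancel. For `bpFib` the coefficient at step `n` is `a` or `b` according to the parity of `n`,
and the exponents `n % 2`, `1 - n % 2` of the statement just select that coefficient. -/

theorem cassini_of_periodic_recurrence {R : Type*} [CommRing R] {c q : ℕ → R}
    (hc : Function.Periodic c 2) (hq : ∀ n, q (n + 2) = c n * q (n + 1) + q n) (k : ℕ) :
    c (k + 1) * q (k + 2) * q k - c k * q (k + 1) ^ 2 =
      (-1) ^ k * (c 1 * q 2 * q 0 - c 0 * q 1 ^ 2) := by
  induction k with
  | zero => simp
  | succ k ih =>
    rw [pow_succ, show k + 1 + 2 = k + 3 from rfl, show k + 1 + 1 = k + 2 from rfl, hc k]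
    linear_combination (-1 : R) * ih + c k * q (k + 1) * hq (k + 1) - c (k + 1) * q (k + 2) * hq k

/-- The coefficient `bpFib a b` applies at step `n`, i.e. in the recurrence for index `n + 2`. -/
def bpFibCoeff (a b : ℝ) (n : ℕ) : ℝ := if Even n then a else b

theorem bpFibCoeff_periodic (a b : ℝ) : Function.Periodic (bpFibCoeff a b) 2 := fun n => by
  simp [bpFibCoeff, Nat.even_add]

theorem bpFib_add_two (a b : ℝ) (n : ℕ) :
    bpFib a b (n + 2) = bpFibCoeff a b n * bpFib a b (n + 1) + bpFib a b n := by
  simp [bpFib, bpFibCoeff, Nat.even_add]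

theorem pow_one_sub_mod_two_mul_pow_mod_two {M : Type*} [CommMonoid M] (a b : M) (n : ℕ) :
    a ^ (1 - n % 2) * b ^ (n % 2) = if Even n then a else b := by
  rcases Nat.even_or_odd n with h | h
  · simp [h, Nat.even_iff.mp h]
  · simp [Nat.not_even_iff_odd.mpr h, Nat.odd_iff.mp h]

theorem bpFib_cassini (a b : ℝ) (n : ℕ) (hn : 1 ≤ n) :
    a ^ (1 - n % 2) * b ^ (n % 2) * bpFib a b (n + 1) * bpFib a b (n - 1) -
      a ^ (n % 2) * b ^ (1 - n % 2) * (bpFib a b n) ^ 2 = a * (-1 : ℝ) ^ n := by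
  obtain ⟨k, rfl⟩ : ∃ k, n = k + 1 := ⟨n - 1, by omega⟩
  have hcoeff : a ^ ((k + 1) % 2) * b ^ (1 - (k + 1) % 2) = bpFibCoeff a b k := by
    rw [mul_comm, pow_one_sub_mod_two_mul_pow_mod_two]
    simp only [bpFibCoeff, Nat.even_add_one, ite_not]
  have hbase : bpFibCoeff a b 1 * bpFib a b 2 * bpFib a b 0 - bpFibCoeff a b 0 * bpFib a b 1 ^ 2
      = -a := by
    simp [bpFib, bpFibCoeff]
  have hcassini := cassini_of_periodic_recurrence (bpFibCoeff_periodic a b) (bpFib_add_two a b) k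
  rw [pow_one_sub_mod_two_mul_pow_mod_two, ← bpFibCoeff, hcoeff, Nat.add_sub_cancel]
  linear_combination hcassini + (-1) ^ k * hbase
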